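/- Let (U,V) be closed subspaces of a Hilbert space H with dim(U∩V) < ∞, dim(U⊥∩V⊥) < ∞, and U + V closed. Then the orthogonal projection onto V⊥ restricted to U, P_{V⊥} : U → V⊥, is a Fredholm operator. -/

import Mathlib

/-!
The kernel of `P_{V⊥}` on `U` is `U ∩ V⊥⊥ = U ∩ V`, and its range is `V⊥ ∩ (U + V)`, which is closed
because `U + V` is. The cokernel `V⊥ / (V⊥ ∩ (U + V))` embeds into `H / (U + V)`, which is isomorphic
to `(U + V)⊥ = U⊥ ∩ V⊥`.
-/

noncomputable section

variable (H : Type) [NormedAddCommGroup H] [InnerProductSpace ℂ H] [CompleteSpace H]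

/-- A bounded operator `T : E → F` is Fredholm: finite-dimensional kernel,
finite-dimensional cokernel, and closed range. -/
def IsFredholmMap {E F : Type} [NormedAddCommGroup E] [InnerProductSpace ℂ E]
    [NormedAddCommGroup F] [InnerProductSpace ℂ F] (T : E →L[ℂ] F) : Prop :=
  FiniteDimensional ℂ ↥(LinearMap.ker (T : E →ₗ[ℂ] F)) ∧
  FiniteDimensional ℂ (F ⧸ LinearMap.range (T : E →ₗ[ℂ] F)) ∧
  IsClosed ((LinearMap.range (T : E →ₗ[ℂ] F) : Submodule ℂ F) : Set F)

open Submodule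

section DivisionRing

variable {K M : Type*} [DivisionRing K] [AddCommGroup M] [Module K M]

theorem finiteDimensional_comap_subtype (P S : Submodule K M) [FiniteDimensional K ↥(P ⊓ S)] :
    FiniteDimensional K (S.comap P.subtype) :=
  ((equivMapOfInjective P.subtype P.injective_subtype _).trans
    (LinearEquiv.ofEq _ _ (map_comap_subtype P S))).symm.finiteDimensional

theorem finiteDimensional_quotient_comap_subtype (P S : Submodule K M)
    [FiniteDimensional K (M ⧸ S)] : FiniteDimensional K (P ⧸ S.comap P.subtype) := by
  have hker : S.comap P.subtype = LinearMap.ker (S.mkQ ∘ₗ P.subtype) := by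
    rw [LinearMap.ker_comp, ker_mkQ]
  exact .of_injective _ (LinearMap.ker_eq_bot.mp (ker_liftQ_eq_bot' _ _ hker))

end DivisionRing

section InnerProductSpace

variable {𝕜 E : Type*} [RCLike 𝕜] [NormedAddCommGroup E] [InnerProductSpace 𝕜 E]

theorem ker_orthogonalProjectionOnto_comp_subtypeL (U K : Submodule 𝕜 E)
    [K.HasOrthogonalProjection] :
    LinearMap.ker (K.orthogonalProjectionOnto ∘L U.subtypeL : U →ₗ[𝕜] K) =
      Kᗮ.comap U.subtype := by
  ext u
  exact orthogonalProjectionOnto_eq_zero_iff (v := (u : E))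

theorem range_orthogonalProjectionOnto_comp_subtypeL (U K : Submodule 𝕜 E)
    [K.HasOrthogonalProjection] :
    LinearMap.range (K.orthogonalProjectionOnto ∘L U.subtypeL : U →ₗ[𝕜] K) =
      (U ⊔ Kᗮ).comap K.subtype := by
  ext y
  rw [LinearMap.mem_range, mem_comap]
  constructor
  · rintro ⟨u, rfl⟩
    have hdecomp : (K.orthogonalProjectionOnto (u : E) : E) = u - (u - K.starProjection u) :=
      (sub_sub_cancel _ _).symm
    change (K.orthogonalProjectionOnto (u : E) : E) ∈ U ⊔ Kᗮ
    rw [hdecomp]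
    exact sub_mem (mem_sup_left u.2) (mem_sup_right (K.sub_starProjection_mem_orthogonal u))
  · intro hy
    obtain ⟨u, hu, w, hw, huw⟩ := mem_sup.mp hy
    refine ⟨⟨u, hu⟩, ?_⟩
    change K.orthogonalProjectionOnto u = y
    rw [eq_sub_of_add_eq huw, map_sub, orthogonalProjectionOnto_eq_zero_iff.mpr hw, sub_zero]
    exact orthogonalProjectionOnto_mem_subspace_eq_self y

theorem finiteDimensional_quotient_of_finiteDimensional_orthogonal (S : Submodule 𝕜 E)
    [S.HasOrthogonalProjection] [FiniteDimensional 𝕜 Sᗮ] : FiniteDimensional 𝕜 (E ⧸ S) :=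
  (S.quotientEquivOfIsCompl Sᗮ S.isCompl_orthogonal).symm.finiteDimensional

end InnerProductSpace

theorem projection_of_fredholm_pair_isFredholm (U V : Submodule ℂ H)
    (hV : IsClosed (V : Set H))
    [Submodule.HasOrthogonalProjection (Vᗮ)]
    (hfin₁ : FiniteDimensional ℂ ↥(U ⊓ V))
    (hfin₂ : FiniteDimensional ℂ ↥(Uᗮ ⊓ Vᗮ))
    (hclosed : IsClosed ((U ⊔ V : Submodule ℂ H) : Set H)) :
    IsFredholmMap ((Submodule.orthogonalProjectionOnto (Vᗮ)) ∘L U.subtypeL) := by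
  have : CompleteSpace V := hV.completeSpace_coe
  have : CompleteSpace ↥(U ⊔ V) := hclosed.completeSpace_coe
  have : FiniteDimensional ℂ ↥(U ⊔ V)ᗮ := by rwa [← inf_orthogonal]
  have : FiniteDimensional ℂ (H ⧸ (U ⊔ V)) :=
    finiteDimensional_quotient_of_finiteDimensional_orthogonal _
  refine ⟨?_, ?_, ?_⟩
  · rw [ker_orthogonalProjectionOnto_comp_subtypeL, orthogonal_orthogonal]
    exact finiteDimensional_comap_subtype U V
  · rw [range_orthogonalProjectionOnto_comp_subtypeL, orthogonal_orthogonal]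
    exact finiteDimensional_quotient_comap_subtype _ _
  · rw [range_orthogonalProjectionOnto_comp_subtypeL, orthogonal_orthogonal]
    exact hclosed.preimage continuous_subtype_val
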